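/- arXiv:0709.1681 — 2 statements merged into one kernel-verified Lean document; each statement's English description precedes it below -/
import Mathlib

section
/- Let a < b be real numbers, let α ∈ (0,1), and let f₁, f₂ : ℝ → ℝ be smooth functions whose supports are compact and contained in the open interval (a,b). Then ∫_a^b f₁(t) (₋D^α f₂)(t) dt = ∫_a^b f₂(t) (₊D^α f₁)(t) dt (the fractional integration-by-parts formula). -/
open MeasureTheory Set

/-- Inner integral of the left-sided fractional derivative with base point `a`. -/
noncomputable def leftFracInt (a α : ℝ) (f : ℝ → ℝ) (t : ℝ) : ℝ :=
  ∫ s in a..t, (f s - f a) / (t - s) ^ α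

/-- The left-sided fractional derivative
`(₋D^α f)(t) = (1/Γ(1−α)) · d/dt ∫_a^t (f s − f a)/(t−s)^α ds`. -/
noncomputable def leftFracDeriv (a α : ℝ) (f : ℝ → ℝ) (t : ℝ) : ℝ :=
  (1 / Real.Gamma (1 - α)) * deriv (leftFracInt a α f) t

/-- Inner integral of the right-sided fractional derivative with base point `b`. -/
noncomputable def rightFracInt (b α : ℝ) (f : ℝ → ℝ) (t : ℝ) : ℝ :=
  ∫ s in t..b, (f b - f s) / (s - t) ^ α

/-- The right-sided fractional derivative
`(₊D^α f)(t) = (1/Γ(1−α)) · d/dt ∫_t^b (f b − f s)/(s−t)^α ds`. -/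
noncomputable def rightFracDeriv (b α : ℝ) (f : ℝ → ℝ) (t : ℝ) : ℝ :=
  (1 / Real.Gamma (1 - α)) * deriv (rightFracInt b α f) t

namespace FracIBP

open Filter Convolution Function

/-- The kernel `u ↦ (max u 0) ^ (1 - α)`. -/
noncomputable def Kk (α u : ℝ) : ℝ := (max u 0) ^ (1 - α)

lemma Kk_of_nonpos {α u : ℝ} (hα : α < 1) (hu : u ≤ 0) : Kk α u = 0 := by
  rw [Kk, max_eq_right hu, Real.zero_rpow (by linarith : (1:ℝ) - α ≠ 0)]

lemma Kk_of_nonneg (α : ℝ) {u : ℝ} (hu : 0 ≤ u) : Kk α u = u ^ (1 - α) := by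
  rw [Kk, max_eq_left hu]

lemma rpow_cont {α : ℝ} (hα : α < 1) : Continuous fun u : ℝ => u ^ (1 - α) := by
  rw [continuous_iff_continuousAt]
  exact fun x => Real.continuousAt_rpow_const x _ (Or.inr (by linarith))

lemma Kk_continuous {α : ℝ} (hα : α < 1) : Continuous (Kk α) :=
  (rpow_cont hα).comp (continuous_id.max continuous_const)

lemma eq_zero_of_notMem {a b : ℝ} {f : ℝ → ℝ} (hs : tsupport f ⊆ Ioo a b) {x : ℝ}
    (hx : x ∉ Ioo a b) : f x = 0 :=
  image_eq_zero_of_notMem_tsupport fun h => hx (hs h)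

lemma tsupport_deriv {a b : ℝ} {f : ℝ → ℝ} (hs : tsupport f ⊆ Ioo a b) :
    tsupport (deriv f) ⊆ Ioo a b :=
  (closure_minimal support_deriv_subset (isClosed_tsupport f)).trans hs

/-- Left fractional integral as a convolution against the kernel. -/
lemma ftc_left {a b α : ℝ} (hα : α ∈ Ioo (0:ℝ) 1) {f : ℝ → ℝ}
    (hf : ContDiff ℝ (⊤ : ℕ∞) f) (hs : tsupport f ⊆ Ioo a b) {t : ℝ} (ht : a < t) :
    leftFracInt a α f t = (1 / (1 - α)) * ∫ s, Kk α s * deriv f (t - s) := by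
  obtain ⟨hα0, hα1⟩ := hα
  have hβ : (0:ℝ) < 1 - α := by linarith
  have hfa : f a = 0 := eq_zero_of_notMem hs (by simp)
  have hfc : Continuous f := hf.continuous
  have hfd : Continuous (deriv f) := hf.continuous_deriv (by simp)
  have hrpc : Continuous fun u : ℝ => u ^ (1 - α) := rpow_cont hα1
  -- step 1 : rewrite the integrand
  have h1 : leftFracInt a α f t = ∫ s in a..t, f s * (t - s) ^ (-α) := by
    unfold leftFracInt
    refine intervalIntegral.integral_congr fun s hsmem => ?_
    rw [uIcc_of_le ht.le] at hsmem
    rw [hfa, sub_zero, Real.rpow_neg (sub_nonneg.2 hsmem.2), div_eq_mul_inv]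
  -- integrability facts
  have hint1 : IntervalIntegrable (fun s => deriv f s * (t - s) ^ (1 - α)) volume a t :=
    (hfd.mul (hrpc.comp (continuous_const.sub continuous_id))).intervalIntegrable a t
  have hint2 : IntervalIntegrable (fun s => (t - s) ^ (-α)) volume a t := by
    have h := (intervalIntegral.intervalIntegrable_rpow' (a := 0) (b := t - a) (r := -α)
      (by linarith)).comp_sub_left t
    simpa using h.symm
  have hint2' : IntervalIntegrable (fun s => f s * (t - s) ^ (-α)) volume a t :=
    hint2.continuousOn_mul hfc.continuousOn
  -- fundamental theorem of calculus
  have hFTC : ∫ s in a..t,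
      (deriv f s * (t - s) ^ (1 - α) - (1 - α) * (f s * (t - s) ^ (-α))) = 0 := by
    have heq := intervalIntegral.integral_eq_sub_of_hasDerivAt_of_le
      (f := fun s => f s * (t - s) ^ (1 - α))
      (f' := fun s => deriv f s * (t - s) ^ (1 - α) - (1 - α) * (f s * (t - s) ^ (-α)))
      ht.le
      ((hfc.continuousOn).mul ((hrpc.comp (continuous_const.sub continuous_id)).continuousOn))
      (fun s hsmem => by
        have hts : (0:ℝ) < t - s := sub_pos.2 hsmem.2
        have h1' : HasDerivAt f (deriv f s) s := (hf.differentiable (by simp) s).hasDerivAt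
        have hb : HasDerivAt (fun s : ℝ => t - s) (-1) s := (hasDerivAt_id s).const_sub t
        have hr : HasDerivAt (fun u : ℝ => u ^ (1 - α))
            ((1 - α) * (t - s) ^ (1 - α - 1)) (t - s) :=
          Real.hasDerivAt_rpow_const (Or.inl hts.ne')
        have h2' := hr.comp s hb
        have h2'' : HasDerivAt (fun s : ℝ => (t - s) ^ (1 - α))
            (-((1 - α) * (t - s) ^ (-α))) s := by
          refine h2'.congr_deriv ?_
          rw [show (1 - α - 1) = -α by ring]
          ring
        have := h1'.mul h2''
        refine this.congr_deriv ?_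
        ring)
      (hint1.sub (hint2'.const_mul _))
    rw [heq]
    simp only [sub_self, Real.zero_rpow (show (1:ℝ) - α ≠ 0 by linarith), mul_zero, hfa,
      zero_mul, sub_zero]
  have hsplit : ∫ s in a..t, deriv f s * (t - s) ^ (1 - α)
      = (1 - α) * ∫ s in a..t, f s * (t - s) ^ (-α) := by
    have h2 := intervalIntegral.integral_sub hint1 (hint2'.const_mul (1 - α))
    rw [hFTC, intervalIntegral.integral_const_mul] at h2
    linarith
  -- extend to the whole line with the kernel
  have h3 : ∫ s in a..t, deriv f s * (t - s) ^ (1 - α) = ∫ s, deriv f s * Kk α (t - s) := by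
    have hcong : ∫ s in a..t, deriv f s * (t - s) ^ (1 - α)
        = ∫ s in a..t, deriv f s * Kk α (t - s) := by
      refine intervalIntegral.integral_congr fun s hsmem => ?_
      rw [uIcc_of_le ht.le] at hsmem
      rw [Kk_of_nonneg α (sub_nonneg.2 hsmem.2)]
    rw [hcong]
    refine intervalIntegral.integral_eq_integral_of_support_subset ?_
    intro s hsup
    by_contra hns
    apply hsup
    rw [mem_Ioc, not_and_or, not_lt, not_le] at hns
    show deriv f s * Kk α (t - s) = 0
    rcases hns with h | h
    · have hns' : s ∉ tsupport f := fun hmem => absurd (hs hmem).1 (not_lt.mpr h)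
      have hd0 : deriv f s = 0 := by
        by_contra h0
        exact hns' (support_deriv_subset h0)
      rw [hd0, zero_mul]
    · rw [Kk_of_nonpos hα1 (by linarith : t - s ≤ 0), mul_zero]
  have h4 : ∫ s, deriv f s * Kk α (t - s) = ∫ s, Kk α s * deriv f (t - s) := by
    have h := integral_sub_left_eq_self (μ := volume)
      (fun u => deriv f u * Kk α (t - u)) t
    rw [← h]
    congr 1
    funext x
    rw [sub_sub_cancel, mul_comm]
  rw [h1, ← h4, ← h3, hsplit]
  field_simp

/-- Right fractional integral as a convolution against the kernel. -/
lemma ftc_right {a b α : ℝ} (hα : α ∈ Ioo (0:ℝ) 1) {f : ℝ → ℝ}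
    (hf : ContDiff ℝ (⊤ : ℕ∞) f) (hs : tsupport f ⊆ Ioo a b) {t : ℝ} (ht : t < b) :
    rightFracInt b α f t = (1 / (1 - α)) * ∫ s, Kk α s * deriv f (t + s) := by
  obtain ⟨hα0, hα1⟩ := hα
  have hβ : (0:ℝ) < 1 - α := by linarith
  have hfb : f b = 0 := eq_zero_of_notMem hs (by simp)
  have hfc : Continuous f := hf.continuous
  have hfd : Continuous (deriv f) := hf.continuous_deriv (by simp)
  have hrpc : Continuous fun u : ℝ => u ^ (1 - α) := rpow_cont hα1
  have h1 : rightFracInt b α f t = ∫ s in t..b, -(f s * (s - t) ^ (-α)) := by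
    unfold rightFracInt
    refine intervalIntegral.integral_congr fun s hsmem => ?_
    rw [uIcc_of_le ht.le] at hsmem
    rw [hfb, zero_sub, Real.rpow_neg (sub_nonneg.2 hsmem.1), div_eq_mul_inv, neg_mul]
  have hint1 : IntervalIntegrable (fun s => deriv f s * (s - t) ^ (1 - α)) volume t b :=
    (hfd.mul (hrpc.comp (continuous_id.sub continuous_const))).intervalIntegrable t b
  have hint2 : IntervalIntegrable (fun s => (s - t) ^ (-α)) volume t b := by
    have h := (intervalIntegral.intervalIntegrable_rpow' (a := 0) (b := b - t) (r := -α)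
      (by linarith)).comp_sub_right t
    simpa using h
  have hint2' : IntervalIntegrable (fun s => f s * (s - t) ^ (-α)) volume t b :=
    hint2.continuousOn_mul hfc.continuousOn
  have hFTC : ∫ s in t..b,
      (deriv f s * (s - t) ^ (1 - α) + (1 - α) * (f s * (s - t) ^ (-α))) = 0 := by
    have heq := intervalIntegral.integral_eq_sub_of_hasDerivAt_of_le
      (f := fun s => f s * (s - t) ^ (1 - α))
      (f' := fun s => deriv f s * (s - t) ^ (1 - α) + (1 - α) * (f s * (s - t) ^ (-α)))
      ht.le
      ((hfc.continuousOn).mul ((hrpc.comp (continuous_id.sub continuous_const)).continuousOn))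
      (fun s hsmem => by
        have hts : (0:ℝ) < s - t := sub_pos.2 hsmem.1
        have h1' : HasDerivAt f (deriv f s) s := (hf.differentiable (by simp) s).hasDerivAt
        have hb : HasDerivAt (fun s : ℝ => s - t) 1 s := (hasDerivAt_id s).sub_const t
        have hr : HasDerivAt (fun u : ℝ => u ^ (1 - α))
            ((1 - α) * (s - t) ^ (1 - α - 1)) (s - t) :=
          Real.hasDerivAt_rpow_const (Or.inl hts.ne')
        have h2' := hr.comp s hb
        have h2'' : HasDerivAt (fun s : ℝ => (s - t) ^ (1 - α))
            ((1 - α) * (s - t) ^ (-α)) s := by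
          refine h2'.congr_deriv ?_
          rw [show (1 - α - 1) = -α by ring]
          ring
        have := h1'.mul h2''
        refine this.congr_deriv ?_
        ring)
      (hint1.add (hint2'.const_mul _))
    rw [heq]
    simp only [sub_self, Real.zero_rpow (show (1:ℝ) - α ≠ 0 by linarith), mul_zero, hfb,
      zero_mul, zero_sub, neg_zero]
  have hsplit : ∫ s in t..b, deriv f s * (s - t) ^ (1 - α)
      = (1 - α) * ∫ s in t..b, -(f s * (s - t) ^ (-α)) := by
    have h2 := intervalIntegral.integral_add hint1 (hint2'.const_mul (1 - α))
    rw [hFTC, intervalIntegral.integral_const_mul] at h2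
    rw [intervalIntegral.integral_neg]
    linarith
  have h3 : ∫ s in t..b, deriv f s * (s - t) ^ (1 - α) = ∫ s, deriv f s * Kk α (s - t) := by
    have hcong : ∫ s in t..b, deriv f s * (s - t) ^ (1 - α)
        = ∫ s in t..b, deriv f s * Kk α (s - t) := by
      refine intervalIntegral.integral_congr fun s hsmem => ?_
      rw [uIcc_of_le ht.le] at hsmem
      rw [Kk_of_nonneg α (sub_nonneg.2 hsmem.1)]
    rw [hcong]
    refine intervalIntegral.integral_eq_integral_of_support_subset ?_
    intro s hsup
    by_contra hns
    apply hsup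
    rw [mem_Ioc, not_and_or, not_lt, not_le] at hns
    show deriv f s * Kk α (s - t) = 0
    rcases hns with h | h
    · rw [Kk_of_nonpos hα1 (by linarith : s - t ≤ 0), mul_zero]
    · have hns' : s ∉ tsupport f := fun hmem => absurd (hs hmem).2 (not_lt.mpr h.le)
      have hd0 : deriv f s = 0 := by
        by_contra h0
        exact hns' (support_deriv_subset h0)
      rw [hd0, zero_mul]
  have h4 : ∫ s, deriv f s * Kk α (s - t) = ∫ s, Kk α s * deriv f (t + s) := by
    have h := integral_add_right_eq_self (μ := volume)
      (fun u => deriv f u * Kk α (u - t)) t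
    rw [← h]
    congr 1
    funext x
    rw [add_sub_cancel_right, mul_comm, add_comm]
  rw [h1, ← h4, ← h3, hsplit]
  field_simp

/-- Differentiating the kernel convolution. -/
lemma hasDerivAt_conv {α : ℝ} (hα : α ∈ Ioo (0:ℝ) 1) {g : ℝ → ℝ}
    (hg : ContDiff ℝ (⊤ : ℕ∞) g) (hcg : HasCompactSupport g) (t : ℝ) :
    HasDerivAt (fun x => ∫ s, Kk α s * g (x - s)) (∫ s, Kk α s * deriv g (t - s)) t := by
  have hK : LocallyIntegrable (Kk α) volume := (Kk_continuous hα.2).locallyIntegrable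
  have h := HasCompactSupport.hasDerivAt_convolution_right
    (L := ContinuousLinearMap.mul ℝ ℝ) hK hcg (hg.of_le (by exact_mod_cast le_top)) t
  exact h

lemma hasDerivAt_conv_right {α : ℝ} (hα : α ∈ Ioo (0:ℝ) 1) {g : ℝ → ℝ}
    (hg : ContDiff ℝ (⊤ : ℕ∞) g) (hcg : HasCompactSupport g) (t : ℝ) :
    HasDerivAt (fun x => ∫ s, Kk α s * g (x + s)) (∫ s, Kk α s * deriv g (t + s)) t := by
  have hng : ContDiff ℝ (⊤ : ℕ∞) fun u => g (-u) := hg.comp contDiff_neg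
  have hncg : HasCompactSupport fun u => g (-u) :=
    hcg.comp_homeomorph (Homeomorph.neg ℝ)
  have h := hasDerivAt_conv hα hng hncg (-t)
  have h2 := h.comp t (hasDerivAt_neg t)
  have hfun : ((fun x => ∫ s, Kk α s * g (-(x - s))) ∘ fun x : ℝ => -x)
      = fun x => ∫ s, Kk α s * g (x + s) := by
    funext x
    simp only [Function.comp_apply]
    congr 1
    funext s
    congr 2
    ring
  have hval : (∫ s, Kk α s * deriv (fun u => g (-u)) (-t - s)) * (-1)
      = ∫ s, Kk α s * deriv g (t + s) := by
    rw [mul_neg_one, ← integral_neg]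
    congr 1
    funext s
    rw [deriv_comp_neg, show -(-t - s) = t + s by ring]
    ring
  rw [hfun] at h2
  rw [← hval]
  exact h2

/-- Integration by parts on the real line. -/
lemma ibp {u v : ℝ → ℝ} (hu : ContDiff ℝ (⊤ : ℕ∞) u) (hv : ContDiff ℝ (⊤ : ℕ∞) v)
    (hcu : HasCompactSupport u) :
    ∫ x, u x * deriv v x = - ∫ x, deriv u x * v x := by
  have h1 : Integrable (fun x => deriv u x * v x) volume :=
    ((hu.continuous_deriv (by exact_mod_cast le_top)).mul hv.continuous).integrable_of_hasCompactSupport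
      (hcu.deriv.mul_right)
  have h2 : Integrable (fun x => u x * deriv v x) volume :=
    (hu.continuous.mul (hv.continuous_deriv (by exact_mod_cast le_top))).integrable_of_hasCompactSupport
      (hcu.mul_right)
  have h3 : Integrable (fun x => u x * v x) volume :=
    (hu.continuous.mul hv.continuous).integrable_of_hasCompactSupport
      (hcu.mul_right)
  have h := integral_mul_fderiv_eq_neg_fderiv_mul_of_integrable (μ := volume)
    (f := u) (g := v) (v := (1:ℝ))
    (by simpa only [fderiv_apply_one_eq_deriv] using h1)
    (by simpa only [fderiv_apply_one_eq_deriv] using h2)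
    h3 (fun x _ => hu.differentiable (by simp) x) (fun x _ => hv.differentiable (by simp) x)
  simpa only [fderiv_apply_one_eq_deriv] using h

lemma ibp2 {u v : ℝ → ℝ} (hu : ContDiff ℝ (⊤ : ℕ∞) u) (hv : ContDiff ℝ (⊤ : ℕ∞) v)
    (hcu : HasCompactSupport u) :
    ∫ x, u x * deriv (deriv v) x = ∫ x, deriv (deriv u) x * v x := by
  have hdu : ContDiff ℝ (⊤ : ℕ∞) (deriv u) := (contDiff_infty_iff_deriv.mp hu).2
  have hdv : ContDiff ℝ (⊤ : ℕ∞) (deriv v) := (contDiff_infty_iff_deriv.mp hv).2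
  rw [ibp hu hdv hcu, ibp hdu hv hcu.deriv, neg_neg]

/-- Fubini swap for compactly supported continuous integrands. -/
lemma swap_integral {φ : ℝ → ℝ → ℝ} {K : Set (ℝ × ℝ)}
    (hcont : Continuous fun p : ℝ × ℝ => φ p.1 p.2)
    (hK : IsCompact K) (h0 : ∀ p : ℝ × ℝ, p ∉ K → φ p.1 p.2 = 0) :
    ∫ t, ∫ s, φ t s = ∫ s, ∫ t, φ t s :=
  integral_integral_swap
    (hcont.integrable_of_hasCompactSupport (HasCompactSupport.intro hK h0))

end FracIBP

open FracIBP Function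

theorem fractional_integration_by_parts
    (a b α : ℝ) (hab : a < b) (hα : α ∈ Ioo (0 : ℝ) 1)
    (f₁ f₂ : ℝ → ℝ) (hf₁ : ContDiff ℝ (⊤ : ℕ∞) f₁) (hf₂ : ContDiff ℝ (⊤ : ℕ∞) f₂)
    (hc₁ : HasCompactSupport f₁) (hc₂ : HasCompactSupport f₂)
    (hs₁ : tsupport f₁ ⊆ Ioo a b) (hs₂ : tsupport f₂ ⊆ Ioo a b) :
    ∫ t in a..b, f₁ t * leftFracDeriv a α f₂ t =
      ∫ t in a..b, f₂ t * rightFracDeriv b α f₁ t := by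
  obtain ⟨hα0, hα1⟩ := hα
  have hβ : (0:ℝ) < 1 - α := by linarith
  have hf₁' : ContDiff ℝ (⊤ : ℕ∞) f₁ := hf₁.of_le (by simp)
  have hf₂' : ContDiff ℝ (⊤ : ℕ∞) f₂ := hf₂.of_le (by simp)
  have hd₁ : ContDiff ℝ (⊤ : ℕ∞) (deriv f₁) := (contDiff_infty_iff_deriv.mp hf₁').2
  have hd₂ : ContDiff ℝ (⊤ : ℕ∞) (deriv f₂) := (contDiff_infty_iff_deriv.mp hf₂').2
  have hcd₁ : HasCompactSupport (deriv f₁) := hc₁.deriv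
  have hcd₂ : HasCompactSupport (deriv f₂) := hc₂.deriv
  have hsd₁ : tsupport (deriv (deriv f₁)) ⊆ Ioo a b := tsupport_deriv (tsupport_deriv hs₁)
  have hsd₂ : tsupport (deriv (deriv f₂)) ⊆ Ioo a b := tsupport_deriv (tsupport_deriv hs₂)
  have hcont₁'' : Continuous (deriv (deriv f₁)) := hd₁.continuous_deriv (by exact_mod_cast le_top)
  have hcont₂'' : Continuous (deriv (deriv f₂)) := hd₂.continuous_deriv (by exact_mod_cast le_top)
  set c : ℝ := (1 / Real.Gamma (1 - α)) * (1 / (1 - α)) with hc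
  -- rewrite the left-hand side
  have hL : ∀ t ∈ uIcc a b, f₁ t * leftFracDeriv a α f₂ t
      = c * (f₁ t * ∫ s, Kk α s * deriv (deriv f₂) (t - s)) := by
    intro t htmem
    by_cases htIoo : t ∈ Ioo a b
    · have hHD := hasDerivAt_conv ⟨hα0, hα1⟩ hd₂ hcd₂ t
      have hderiv : deriv (leftFracInt a α f₂) t
          = (1 / (1 - α)) * ∫ s, Kk α s * deriv (deriv f₂) (t - s) := by
        have hev : leftFracInt a α f₂
            =ᶠ[nhds t] fun u => (1 / (1 - α)) * ∫ s, Kk α s * deriv f₂ (u - s) := by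
          filter_upwards [isOpen_Ioi.mem_nhds htIoo.1] with u hu
          exact ftc_left ⟨hα0, hα1⟩ hf₂ hs₂ hu
        rw [hev.deriv_eq, deriv_const_mul _ hHD.differentiableAt, hHD.deriv]
      simp only [leftFracDeriv]
      rw [hderiv, hc]
      ring
    · have h0 : f₁ t = 0 := eq_zero_of_notMem hs₁ htIoo
      simp [h0]
  -- rewrite the right-hand side
  have hR : ∀ t ∈ uIcc a b, f₂ t * rightFracDeriv b α f₁ t
      = c * (f₂ t * ∫ s, Kk α s * deriv (deriv f₁) (t + s)) := by
    intro t htmem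
    by_cases htIoo : t ∈ Ioo a b
    · have hHD := hasDerivAt_conv_right ⟨hα0, hα1⟩ hd₁ hcd₁ t
      have hderiv : deriv (rightFracInt b α f₁) t
          = (1 / (1 - α)) * ∫ s, Kk α s * deriv (deriv f₁) (t + s) := by
        have hev : rightFracInt b α f₁
            =ᶠ[nhds t] fun u => (1 / (1 - α)) * ∫ s, Kk α s * deriv f₁ (u + s) := by
          filter_upwards [isOpen_Iio.mem_nhds htIoo.2] with u hu
          exact ftc_right ⟨hα0, hα1⟩ hf₁ hs₁ hu
        rw [hev.deriv_eq, deriv_const_mul _ hHD.differentiableAt, hHD.deriv]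
      simp only [rightFracDeriv]
      rw [hderiv, hc]
      ring
    · have h0 : f₂ t = 0 := eq_zero_of_notMem hs₂ htIoo
      simp [h0]
  rw [intervalIntegral.integral_congr hL, intervalIntegral.integral_congr hR,
    intervalIntegral.integral_const_mul, intervalIntegral.integral_const_mul]
  congr 1
  -- pass to integrals over ℝ
  have hXsupp : support (fun t => f₁ t * ∫ s, Kk α s * deriv (deriv f₂) (t - s)) ⊆ Ioc a b := by
    intro t ht
    have h1 : f₁ t ≠ 0 := fun h0 => ht (by simp [h0])
    exact Ioo_subset_Ioc_self (hs₁ (subset_tsupport _ h1))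
  have hYsupp : support (fun t => f₂ t * ∫ s, Kk α s * deriv (deriv f₁) (t + s)) ⊆ Ioc a b := by
    intro t ht
    have h1 : f₂ t ≠ 0 := fun h0 => ht (by simp [h0])
    exact Ioo_subset_Ioc_self (hs₂ (subset_tsupport _ h1))
  rw [intervalIntegral.integral_eq_integral_of_support_subset hXsupp,
    intervalIntegral.integral_eq_integral_of_support_subset hYsupp]
  -- Fubini data for the first integrand
  have hcont1 : Continuous fun p : ℝ × ℝ =>
      f₁ p.1 * (Kk α p.2 * deriv (deriv f₂) (p.1 - p.2)) :=
    (hf₁.continuous.comp continuous_fst).mul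
      (((Kk_continuous hα1).comp continuous_snd).mul
        (hcont₂''.comp (continuous_fst.sub continuous_snd)))
  have hK1 : IsCompact ((Icc a b : Set ℝ) ×ˢ (Icc (a - b) (b - a) : Set ℝ)) :=
    isCompact_Icc.prod isCompact_Icc
  have h01 : ∀ p : ℝ × ℝ, p ∉ ((Icc a b : Set ℝ) ×ˢ (Icc (a - b) (b - a) : Set ℝ)) →
      f₁ p.1 * (Kk α p.2 * deriv (deriv f₂) (p.1 - p.2)) = 0 := by
    rintro ⟨t, s⟩ hts
    by_cases ht1 : t ∈ Icc a b
    · have hs2 : s ∉ Icc (a - b) (b - a) := fun h => hts (mk_mem_prod ht1 h)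
      rw [mem_Icc, not_and_or, not_le, not_le] at hs2
      have hnot : t - s ∉ Ioo a b := by
        intro hm
        rcases hs2 with h | h
        · exact absurd hm.2 (by push_neg; linarith [ht1.1])
        · exact absurd hm.1 (by push_neg; linarith [ht1.2])
      rw [eq_zero_of_notMem hsd₂ hnot, mul_zero, mul_zero]
    · rw [eq_zero_of_notMem hs₁ (fun hm => ht1 (Ioo_subset_Icc_self hm)), zero_mul]
  -- Fubini data for the second integrand
  have hcont2 : Continuous fun p : ℝ × ℝ =>
      f₂ p.2 * (Kk α p.1 * deriv (deriv f₁) (p.2 + p.1)) :=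
    (hf₂.continuous.comp continuous_snd).mul
      (((Kk_continuous hα1).comp continuous_fst).mul
        (hcont₁''.comp (continuous_snd.add continuous_fst)))
  have hK2 : IsCompact ((Icc (a - b) (b - a) : Set ℝ) ×ˢ (Icc a b : Set ℝ)) :=
    isCompact_Icc.prod isCompact_Icc
  have h02 : ∀ p : ℝ × ℝ, p ∉ ((Icc (a - b) (b - a) : Set ℝ) ×ˢ (Icc a b : Set ℝ)) →
      f₂ p.2 * (Kk α p.1 * deriv (deriv f₁) (p.2 + p.1)) = 0 := by
    rintro ⟨s, t⟩ hts
    by_cases ht1 : t ∈ Icc a b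
    · have hs2 : s ∉ Icc (a - b) (b - a) := fun h => hts (mk_mem_prod h ht1)
      rw [mem_Icc, not_and_or, not_le, not_le] at hs2
      have hnot : t + s ∉ Ioo a b := by
        intro hm
        rcases hs2 with h | h
        · exact absurd hm.1 (by push_neg; linarith [ht1.1, ht1.2])
        · exact absurd hm.2 (by push_neg; linarith [ht1.1, ht1.2])
      rw [eq_zero_of_notMem hsd₁ hnot, mul_zero, mul_zero]
    · rw [eq_zero_of_notMem hs₂ (fun hm => ht1 (Ioo_subset_Icc_self hm)), zero_mul]
  calc ∫ t, f₁ t * ∫ s, Kk α s * deriv (deriv f₂) (t - s)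
      = ∫ t, ∫ s, f₁ t * (Kk α s * deriv (deriv f₂) (t - s)) := by
        congr 1
        funext t
        rw [integral_const_mul]
    _ = ∫ s, ∫ t, f₁ t * (Kk α s * deriv (deriv f₂) (t - s)) :=
        swap_integral hcont1 hK1 h01
    _ = ∫ s, ∫ t, f₂ t * (Kk α s * deriv (deriv f₁) (t + s)) := by
        congr 1
        funext s
        rw [show (fun t => f₁ t * (Kk α s * deriv (deriv f₂) (t - s)))
            = fun t => Kk α s * (f₁ t * deriv (deriv f₂) (t - s)) from
          funext fun t => by ring]
        rw [show (fun t => f₂ t * (Kk α s * deriv (deriv f₁) (t + s)))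
            = fun t => Kk α s * (deriv (deriv f₁) (t + s) * f₂ t) from
          funext fun t => by ring]
        rw [integral_const_mul, integral_const_mul]
        congr 1
        -- shift and integrate by parts twice
        have hsh := integral_add_right_eq_self (μ := volume)
          (fun x => f₁ x * deriv (deriv f₂) (x - s)) s
        simp only [add_sub_cancel_right] at hsh
        rw [← hsh]
        have hu : ContDiff ℝ (⊤ : ℕ∞) fun x => f₁ (x + s) :=
          hf₁'.comp (contDiff_id.add contDiff_const)
        have hcu : HasCompactSupport fun x => f₁ (x + s) :=
          hc₁.comp_homeomorph (Homeomorph.addRight s)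
        rw [ibp2 hu hf₂' hcu]
        have hde : deriv (fun x => f₁ (x + s)) = fun x => deriv f₁ (x + s) :=
          funext fun x => deriv_comp_add_const _ _ _
        have hde2 : deriv (deriv (fun x => f₁ (x + s))) = fun x => deriv (deriv f₁) (x + s) := by
          rw [hde]
          exact funext fun x => deriv_comp_add_const _ _ _
        rw [hde2]
    _ = ∫ t, ∫ s, f₂ t * (Kk α s * deriv (deriv f₁) (t + s)) :=
        swap_integral hcont2 hK2 h02
    _ = ∫ t, f₂ t * ∫ s, Kk α s * deriv (deriv f₁) (t + s) := by
        congr 1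
        funext t
        rw [integral_const_mul]
end

section
/- Let a₁ ∈ ℝ, let U₂ : ℝ × ℝ → ℝ be smooth with V₂(t,X) = ∂U₂/∂X(t,X), and let x : ℝ → ℝ be smooth with compact support. Define the fractional Lagrange function with α = 1/2 by L(t, X, u, v) = U₂(t,X) − (a₁/2)u² + (1/2)v², where u stands for the jet coordinate y^{(1/2)} = D^{1/2}x and v for y^{(1)} = x′. Then for every t ∈ ℝ the Euler–Lagrange expression of L along x satisfies ∂L/∂X(t, x(t), (D^{1/2}x)(t), x′(t)) − D^{1/2}[ s ↦ ∂L/∂u(s, x(s), (D^{1/2}x)(s), x′(s)) ](t) + d/dt[ s ↦ ∂L/∂v(s, x(s), (D^{1/2}x)(s), x′(s)) ](t) = V₂(t, x(t)) + a₁ x′(t) + x″(t). Consequently, the second-order differential equation x″(t) + a₁ x′(t) + V₂(t, x(t)) = 0 (which includes the nonhomogeneous classical friction equation and the Phillips model) is the Euler–Lagrange equation of the fractional Lagrangian L with α = 1/2. -/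
open MeasureTheory Set

/-- The left-sided Liouville fractional derivative of order `γ ∈ (0,1)`:
`(D^γ g)(t) = (1/Γ(1−γ)) · d/dt ∫_{−∞}^t g s · (t−s)^{−γ} ds`. -/
noncomputable def liouvilleDerivL (γ : ℝ) (g : ℝ → ℝ) (t : ℝ) : ℝ :=
  (1 / Real.Gamma (1 - γ)) * deriv (fun τ => ∫ s in Iic τ, g s * (τ - s) ^ (-γ)) t

set_option maxHeartbeats 1000000


lemma kern_zero {y : ℝ} (hy : y ≤ 0) : y ^ (-(1/2) : ℝ) = 0 := by
  rcases lt_or_eq_of_le hy with h | h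
  · rw [Real.rpow_def_of_neg h, show (-(1/2) : ℝ) * Real.pi = -(Real.pi/2) by ring,
      Real.cos_neg, Real.cos_pi_div_two, mul_zero]
  · rw [h]; exact Real.zero_rpow (show (-(1/2):ℝ) ≠ 0 by norm_num)

lemma kern_nonneg (y : ℝ) : 0 ≤ y ^ (-(1/2) : ℝ) := by
  rcases le_or_gt y 0 with h | h
  · rw [kern_zero h]
  · exact Real.rpow_nonneg h.le _

lemma integral_Iic_comp_sub (F : ℝ → ℝ) (τ : ℝ) :
    ∫ s in Iic τ, F s = ∫ u in Ioi (0:ℝ), F (τ - u) := by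
  have hmp : MeasurePreserving (fun u : ℝ => τ - u) volume volume := by
    have h1 : MeasurePreserving (fun u : ℝ => τ + u) volume volume :=
      measurePreserving_add_left volume τ
    have h2 : MeasurePreserving (fun u : ℝ => -u) volume volume :=
      Measure.measurePreserving_neg volume
    have := h1.comp h2
    simpa [Function.comp_def, sub_eq_add_neg] using this
  have hemb : MeasurableEmbedding (fun u : ℝ => τ - u) :=
    (Homeomorph.subLeft τ).isClosedEmbedding.measurableEmbedding
  have himg : (fun u : ℝ => τ - u) '' Ioi 0 = Iio τ := by
    rw [image_const_sub_Ioi]; simp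
  calc ∫ s in Iic τ, F s = ∫ s in Iio τ, F s := integral_Iic_eq_integral_Iio
    _ = ∫ u in Ioi (0:ℝ), F (τ - u) := by
        rw [← himg, hmp.setIntegral_image_emb hemb]

-- support radius
lemma support_radius {f : ℝ → ℝ} (hfc : HasCompactSupport f) :
    ∃ R : ℝ, 0 ≤ R ∧ ∀ y : ℝ, R < |y| → f y = 0 := by
  obtain ⟨R, hR⟩ := hfc.isCompact.isBounded.subset_closedBall 0
  refine ⟨max R 0, le_max_right _ _, fun y hy => ?_⟩
  by_contra h
  have : y ∈ tsupport f := subset_tsupport f (by simpa using h)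
  have := hR this
  rw [Metric.mem_closedBall, Real.dist_eq, sub_zero] at this
  have : |y| ≤ max R 0 := le_trans this (le_max_left _ _)
  linarith

-- integrability of u ↦ f (τ - u) * u ^ e on Ioi 0
lemma integrableOn_conv {f : ℝ → ℝ} (hf : Continuous f) (hfc : HasCompactSupport f)
    (τ : ℝ) {e : ℝ} (he : -1 < e) :
    IntegrableOn (fun u => f (τ - u) * u ^ e) (Ioi (0:ℝ)) := by
  obtain ⟨R, hR0, hR⟩ := support_radius hfc
  obtain ⟨M, hM⟩ := hfc.exists_bound_of_continuous hf
  have hM0 : 0 ≤ M := le_trans (norm_nonneg _) (hM 0)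
  set B : ℝ := max (τ + R) 1 with hB
  have hB0 : (0:ℝ) < B := lt_of_lt_of_le one_pos (le_max_right _ _)
  have hint : IntegrableOn (fun u : ℝ => M * u ^ e) (Ioc (0:ℝ) B) := by
    have : IntervalIntegrable (fun u : ℝ => u ^ e) volume 0 B :=
      intervalIntegral.intervalIntegrable_rpow' he
    exact ((intervalIntegrable_iff_integrableOn_Ioc_of_le hB0.le).mp this).const_mul M
  have hbound : Integrable ((Ioc (0:ℝ) B).indicator (fun u : ℝ => M * u ^ e))
      (volume.restrict (Ioi (0:ℝ))) :=
    (hint.integrable_indicator measurableSet_Ioc).restrict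
  refine Integrable.mono' hbound ?_ ?_
  · exact ((hf.comp (continuous_const.sub continuous_id)).aestronglyMeasurable.mul
      (measurable_id.pow_const e).aestronglyMeasurable).restrict
  · refine (ae_restrict_iff' measurableSet_Ioi).mpr (Filter.Eventually.of_forall fun u hu => ?_)
    rcases le_or_gt u B with h | h
    · have hval : (Ioc (0:ℝ) B).indicator (fun u : ℝ => M * u ^ e) u = M * u ^ e :=
        indicator_of_mem (show u ∈ Ioc (0:ℝ) B from ⟨hu, h⟩) _
      rw [hval, Real.norm_eq_abs, abs_mul]
      have h1 : |f (τ - u)| ≤ M := (Real.norm_eq_abs _) ▸ hM (τ - u)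
      have h2 : |u ^ e| = u ^ e := abs_of_nonneg (Real.rpow_nonneg (le_of_lt hu) e)
      rw [h2]
      exact mul_le_mul_of_nonneg_right h1 (Real.rpow_nonneg (le_of_lt hu) e)
    · have htR : τ + R < u := lt_of_le_of_lt (le_max_left _ _) h
      have hf0 : f (τ - u) = 0 := by
        apply hR
        calc R < u - τ := by linarith
          _ ≤ |u - τ| := le_abs_self _
          _ = |τ - u| := abs_sub_comm _ _
      rw [hf0, zero_mul, norm_zero]
      exact indicator_nonneg (fun v hv => mul_nonneg hM0 (Real.rpow_nonneg hv.1.le e)) u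

lemma integrableOn_conv2 {f : ℝ → ℝ} (hf : Continuous f) (hfc : HasCompactSupport f) (τ : ℝ) :
    IntegrableOn (fun u => f (τ - u) * (2 * u ^ ((1/2):ℝ))) (Ioi (0:ℝ)) := by
  have h := (integrableOn_conv hf hfc τ (e := (1/2:ℝ)) (by norm_num)).const_mul 2
  have : (fun u : ℝ => f (τ - u) * (2 * u ^ ((1/2):ℝ)))
      = fun u : ℝ => 2 * (f (τ - u) * u ^ ((1/2):ℝ)) := by funext u; ring
  rw [this]; exact h

lemma hasDerivAt_G {f : ℝ → ℝ} (hf : ContDiff ℝ (⊤:ℕ∞) f) (τ : ℝ) {u : ℝ} (hu : u ≠ 0) :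
    HasDerivAt (fun u : ℝ => -(f (τ - u) * (2 * u ^ ((1/2):ℝ))))
      (deriv f (τ - u) * (2 * u ^ ((1/2):ℝ)) - f (τ - u) * u ^ (-(1/2):ℝ)) u := by
  have hfd : HasDerivAt f (deriv f (τ - u)) (τ - u) :=
    (hf.differentiable (by simp) (τ - u)).hasDerivAt
  have h1 : HasDerivAt (fun u : ℝ => f (τ - u)) (-deriv f (τ - u)) u := by
    have h := hfd.comp u ((hasDerivAt_id u).const_sub τ)
    simpa [mul_comm, Function.comp_def] using h
  have h2 : HasDerivAt (fun u : ℝ => 2 * u ^ ((1/2):ℝ)) (u ^ (-(1/2):ℝ)) u := by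
    have := (Real.hasDerivAt_rpow_const (x := u) (p := (1/2:ℝ)) (Or.inl hu)).const_mul 2
    have he : 2 * ((1/2:ℝ) * u ^ ((1/2:ℝ) - 1)) = u ^ (-(1/2):ℝ) := by
      rw [show ((1/2:ℝ) - 1) = -(1/2) by norm_num]; ring
    rwa [he] at this
  have := (h1.mul h2).neg
  exact this.congr_deriv (by ring)

lemma ibp {f : ℝ → ℝ} (hf : ContDiff ℝ (⊤:ℕ∞) f) (hfc : HasCompactSupport f) (τ : ℝ) :
    ∫ u in Ioi (0:ℝ), f (τ - u) * u ^ (-(1/2):ℝ)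
      = ∫ u in Ioi (0:ℝ), deriv f (τ - u) * (2 * u ^ ((1/2):ℝ)) := by
  obtain ⟨R, hR0, hR⟩ := support_radius hfc
  set G : ℝ → ℝ := fun u => -(f (τ - u) * (2 * u ^ ((1/2):ℝ))) with hG
  have hint1 : IntegrableOn (fun u => f (τ - u) * u ^ (-(1/2):ℝ)) (Ioi (0:ℝ)) :=
    integrableOn_conv hf.continuous hfc τ (by norm_num)
  have hdc : Continuous (deriv f) :=
    (contDiff_infty_iff_deriv.mp hf).2.continuous
  have hint2 : IntegrableOn (fun u => deriv f (τ - u) * (2 * u ^ ((1/2):ℝ))) (Ioi (0:ℝ)) :=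
    integrableOn_conv2 hdc hfc.deriv τ
  have hcont : ContinuousWithinAt G (Ici 0) 0 := by
    apply Continuous.continuousWithinAt
    apply Continuous.neg
    apply Continuous.mul (hf.continuous.comp (continuous_const.sub continuous_id))
    apply Continuous.mul continuous_const
    exact Real.continuous_rpow_const (by norm_num)
  have hderiv : ∀ u ∈ Ioi (0:ℝ), HasDerivAt G
      (deriv f (τ - u) * (2 * u ^ ((1/2):ℝ)) - f (τ - u) * u ^ (-(1/2):ℝ)) u :=
    fun u hu => hasDerivAt_G hf τ (ne_of_gt hu)
  have htend : Filter.Tendsto G Filter.atTop (nhds 0) := by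
    have hev : G =ᶠ[Filter.atTop] fun _ => (0:ℝ) := by
      rw [Filter.EventuallyEq, Filter.eventually_atTop]
      refine ⟨τ + R + 1, fun u hu => ?_⟩
      have : f (τ - u) = 0 := by
        apply hR
        calc R < u - τ := by linarith
          _ ≤ |u - τ| := le_abs_self _
          _ = |τ - u| := abs_sub_comm _ _
      simp [hG, this]
    exact (Filter.tendsto_congr' hev).mpr tendsto_const_nhds
  have key := integral_Ioi_of_hasDerivAt_of_tendsto hcont hderiv (hint2.sub hint1) htend
  have hG0 : G 0 = 0 := by
    simp [hG, Real.zero_rpow (show ((1/2):ℝ) ≠ 0 by norm_num)]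
  rw [hG0, sub_zero, integral_sub hint2 hint1] at key
  linarith

lemma hasDerivAt_conv {f : ℝ → ℝ} (hf : ContDiff ℝ (⊤:ℕ∞) f) (hfc : HasCompactSupport f) (τ₀ : ℝ) :
    HasDerivAt (fun τ => ∫ u in Ioi (0:ℝ), f (τ - u) * (2 * u ^ ((1/2):ℝ)))
      (∫ u in Ioi (0:ℝ), deriv f (τ₀ - u) * (2 * u ^ ((1/2):ℝ))) τ₀ := by
  have hdc : Continuous (deriv f) :=
    (contDiff_infty_iff_deriv.mp hf).2.continuous
  obtain ⟨R, hR0, hR⟩ := support_radius hfc.deriv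
  obtain ⟨M, hM⟩ := hfc.deriv.exists_bound_of_continuous hdc
  have hM0 : 0 ≤ M := le_trans (norm_nonneg _) (hM 0)
  set B : ℝ := max (|τ₀| + 1 + R) 1 with hB
  have hB0 : (0:ℝ) < B := lt_of_lt_of_le one_pos (le_max_right _ _)
  set bound : ℝ → ℝ := (Ioc (0:ℝ) B).indicator (fun u => M * (2 * B ^ ((1/2):ℝ))) with hbd
  have hmeas : ∀ τ : ℝ, AEStronglyMeasurable (fun u : ℝ => f (τ - u) * (2 * u ^ ((1/2):ℝ)))
      (volume.restrict (Ioi (0:ℝ))) := fun τ =>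
    ((hf.continuous.comp (continuous_const.sub continuous_id)).aestronglyMeasurable.mul
      ((measurable_id.pow_const ((1/2):ℝ)).const_mul 2).aestronglyMeasurable).restrict
  have hmeas' : AEStronglyMeasurable (fun u : ℝ => deriv f (τ₀ - u) * (2 * u ^ ((1/2):ℝ)))
      (volume.restrict (Ioi (0:ℝ))) :=
    ((hdc.comp (continuous_const.sub continuous_id)).aestronglyMeasurable.mul
      ((measurable_id.pow_const ((1/2):ℝ)).const_mul 2).aestronglyMeasurable).restrict
  have hbound_int : Integrable bound (volume.restrict (Ioi (0:ℝ))) := by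
    rw [hbd]
    exact ((integrableOn_const measure_Ioc_lt_top.ne).integrable_indicator
      measurableSet_Ioc).restrict
  have h_bound : ∀ᵐ u ∂(volume.restrict (Ioi (0:ℝ))), ∀ τ ∈ Metric.ball τ₀ 1,
      ‖deriv f (τ - u) * (2 * u ^ ((1/2):ℝ))‖ ≤ bound u := by
    refine (ae_restrict_iff' measurableSet_Ioi).mpr (Filter.Eventually.of_forall fun u hu => ?_)
    intro τ hτ
    have hττ₀ : |τ - τ₀| < 1 := by
      rw [Metric.mem_ball, Real.dist_eq] at hτ; exact hτ
    rcases le_or_gt u B with h | h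
    · have : bound u = M * (2 * B ^ ((1/2):ℝ)) :=
        indicator_of_mem (show u ∈ Ioc (0:ℝ) B from ⟨hu, h⟩) _
      rw [this, Real.norm_eq_abs, abs_mul]
      have h1 : |deriv f (τ - u)| ≤ M := (Real.norm_eq_abs _) ▸ hM (τ - u)
      have h2 : |2 * u ^ ((1/2):ℝ)| ≤ 2 * B ^ ((1/2):ℝ) := by
        rw [abs_mul, abs_two, abs_of_nonneg (Real.rpow_nonneg (le_of_lt hu) _)]
        have := Real.rpow_le_rpow (le_of_lt hu) h (by norm_num : (0:ℝ) ≤ 1/2)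
        linarith
      exact mul_le_mul h1 h2 (abs_nonneg _) hM0
    · have hf0 : deriv f (τ - u) = 0 := by
        apply hR
        have hb : |τ₀| + 1 + R < u := lt_of_le_of_lt (le_max_left _ _) h
        have : τ < |τ₀| + 1 := by
          have := abs_lt.mp hττ₀
          have := le_abs_self τ₀
          linarith
        calc R < u - τ := by linarith
          _ ≤ |u - τ| := le_abs_self _
          _ = |τ - u| := abs_sub_comm _ _
      rw [hf0, zero_mul, norm_zero, hbd]
      exact indicator_nonneg (fun v hv => by positivity) u
  have h_diff : ∀ᵐ u ∂(volume.restrict (Ioi (0:ℝ))), ∀ τ ∈ Metric.ball τ₀ 1,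
      HasDerivAt (fun τ => f (τ - u) * (2 * u ^ ((1/2):ℝ)))
        (deriv f (τ - u) * (2 * u ^ ((1/2):ℝ))) τ := by
    refine Filter.Eventually.of_forall fun u => fun τ _ => ?_
    have hfd : HasDerivAt f (deriv f (τ - u)) (τ - u) :=
      (hf.differentiable (by simp) (τ - u)).hasDerivAt
    have h := (hfd.comp τ ((hasDerivAt_id τ).sub_const u)).mul_const (2 * u ^ ((1/2):ℝ))
    simpa using h
  have hF_int : Integrable (fun u : ℝ => f (τ₀ - u) * (2 * u ^ ((1/2):ℝ)))
      (volume.restrict (Ioi (0:ℝ))) := integrableOn_conv2 hf.continuous hfc τ₀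
  exact (hasDerivAt_integral_of_dominated_loc_of_deriv_le (Metric.ball_mem_nhds τ₀ one_pos)
    (Filter.Eventually.of_forall hmeas) hF_int hmeas' h_bound hbound_int h_diff).2

lemma hasDerivAt_F {f : ℝ → ℝ} (hf : ContDiff ℝ (⊤:ℕ∞) f) (hfc : HasCompactSupport f) (τ₀ : ℝ) :
    HasDerivAt (fun τ => ∫ s in Iic τ, f s * (τ - s) ^ (-(1/2):ℝ))
      (∫ u in Ioi (0:ℝ), deriv f (τ₀ - u) * u ^ (-(1/2):ℝ)) τ₀ := by
  have hf' : ContDiff ℝ (⊤:ℕ∞) (deriv f) := (contDiff_infty_iff_deriv.mp hf).2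
  have heq : (fun τ => ∫ s in Iic τ, f s * (τ - s) ^ (-(1/2):ℝ))
      = fun τ => ∫ u in Ioi (0:ℝ), deriv f (τ - u) * (2 * u ^ ((1/2):ℝ)) := by
    funext τ
    rw [integral_Iic_comp_sub (fun s => f s * (τ - s) ^ (-(1/2):ℝ)) τ]
    simp_rw [sub_sub_cancel]
    exact ibp hf hfc τ
  rw [heq]
  have h := hasDerivAt_conv hf' hfc.deriv τ₀
  rwa [← ibp hf' hfc.deriv τ₀] at h

lemma liouville_repr {f : ℝ → ℝ} (hf : ContDiff ℝ (⊤:ℕ∞) f) (hfc : HasCompactSupport f) (t : ℝ) :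
    liouvilleDerivL (1/2) f t
      = (1 / Real.sqrt Real.pi) * ∫ r in Iic t, deriv f r * (t - r) ^ (-(1/2):ℝ) := by
  rw [liouvilleDerivL, show (1:ℝ) - 1/2 = 1/2 by norm_num, Real.Gamma_one_half_eq]
  congr 1
  rw [(hasDerivAt_F hf hfc t).deriv,
    integral_Iic_comp_sub (fun r => deriv f r * (t - r) ^ (-(1/2):ℝ)) t]
  simp_rw [sub_sub_cancel]

lemma beta_half : Complex.betaIntegral (1/2) (1/2) = Real.pi := by
  have h := Complex.Gamma_mul_Gamma_eq_betaIntegral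
    (s := (1/2:ℂ)) (t := (1/2:ℂ)) (by norm_num) (by norm_num)
  rw [show (1/2 + 1/2 : ℂ) = 1 by norm_num, Complex.Gamma_one, one_mul] at h
  rw [← h, Complex.Gamma_one_half_eq,
    ← Complex.cpow_add _ _ (by exact_mod_cast Real.pi_ne_zero : (Real.pi:ℂ) ≠ 0)]
  norm_num

lemma beta_value {a : ℝ} (ha : 0 < a) :
    ∫ s in (0:ℝ)..a, s ^ (-(1/2):ℝ) * (a - s) ^ (-(1/2):ℝ) = Real.pi := by
  have hs := Complex.betaIntegral_scaled (1/2) (1/2) ha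
  rw [show (1/2 + 1/2 - 1 : ℂ) = 0 by norm_num, Complex.cpow_zero, one_mul, beta_half] at hs
  have hcast : ∫ s in (0:ℝ)..a, ((s ^ (-(1/2):ℝ) * (a - s) ^ (-(1/2):ℝ) : ℝ) : ℂ)
      = ∫ s in (0:ℝ)..a, (s:ℂ) ^ ((1/2:ℂ) - 1) * ((a:ℂ) - s) ^ ((1/2:ℂ) - 1) := by
    rw [intervalIntegral.integral_of_le ha.le, intervalIntegral.integral_of_le ha.le]
    refine setIntegral_congr_fun measurableSet_Ioc fun s hs' => ?_
    have h0s : (0:ℝ) ≤ s := hs'.1.le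
    have hsa : (0:ℝ) ≤ a - s := by linarith [hs'.2]
    rw [Complex.ofReal_mul, Complex.ofReal_cpow h0s, Complex.ofReal_cpow hsa]
    push_cast
    norm_num
  rw [hs] at hcast
  rw [intervalIntegral.integral_ofReal] at hcast
  exact_mod_cast hcast

lemma kern_zero' {y : ℝ} (hy : y ≤ 0) : y ^ (-(1/2) : ℝ) = 0 := by
  rcases lt_or_eq_of_le hy with h | h
  · rw [Real.rpow_def_of_neg h, show (-(1/2) : ℝ) * Real.pi = -(Real.pi/2) by ring,
      Real.cos_neg, Real.cos_pi_div_two, mul_zero]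
  · rw [h]; exact Real.zero_rpow (show (-(1/2):ℝ) ≠ 0 by norm_num)

lemma kern_nonneg' (y : ℝ) : 0 ≤ y ^ (-(1/2) : ℝ) := by
  rcases le_or_gt y 0 with h | h
  · rw [kern_zero' h]
  · exact Real.rpow_nonneg h.le _

lemma kernel_integral {r t : ℝ} (h : r < t) :
    ∫ s in r..t, (s - r) ^ (-(1/2):ℝ) * (t - s) ^ (-(1/2):ℝ) = Real.pi := by
  calc ∫ s in r..t, (s - r) ^ (-(1/2):ℝ) * (t - s) ^ (-(1/2):ℝ)
      = ∫ s in r..t, (fun x : ℝ => x ^ (-(1/2):ℝ) * ((t - r) - x) ^ (-(1/2):ℝ)) (s - r) := by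
        congr 1; funext s; simp only []; rw [show (t - r) - (s - r) = t - s by ring]
    _ = ∫ x in r - r..t - r, x ^ (-(1/2):ℝ) * ((t - r) - x) ^ (-(1/2):ℝ) :=
        intervalIntegral.integral_comp_sub_right
          (fun x : ℝ => x ^ (-(1/2):ℝ) * ((t - r) - x) ^ (-(1/2):ℝ)) r
    _ = Real.pi := by rw [sub_self]; exact beta_value (by linarith)

lemma kernel_meas (r t : ℝ) :
    Measurable (fun s : ℝ => (s - r) ^ (-(1/2):ℝ) * (t - s) ^ (-(1/2):ℝ)) :=
  ((measurable_id.sub_const r).pow_const _).mul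
    ((measurable_const.sub measurable_id).pow_const _)

lemma kernel_integrableOn {r t : ℝ} (h : r < t) :
    IntegrableOn (fun s : ℝ => (s - r) ^ (-(1/2):ℝ) * (t - s) ^ (-(1/2):ℝ)) (Ioc r t) := by
  set m : ℝ := (r + t) / 2 with hm
  have hrm : r < m := by rw [hm]; linarith
  have hmt : m < t := by rw [hm]; linarith
  have part1 : IntegrableOn (fun s : ℝ => (s - r) ^ (-(1/2):ℝ) * (t - s) ^ (-(1/2):ℝ))
      (Ioc r m) := by
    have base : IntervalIntegrable (fun x : ℝ => x ^ (-(1/2):ℝ)) volume 0 (m - r) :=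
      intervalIntegral.intervalIntegrable_rpow' (by norm_num)
    have comp := base.comp_sub_right r
    rw [zero_add, sub_add_cancel] at comp
    have hbase : IntegrableOn (fun s : ℝ => (s - r) ^ (-(1/2):ℝ)) (Ioc r m) :=
      (intervalIntegrable_iff_integrableOn_Ioc_of_le hrm.le).mp comp
    refine Integrable.mono' (hbase.mul_const ((t - m) ^ (-(1/2):ℝ))) 
      ((kernel_meas r t).aestronglyMeasurable.restrict) ?_
    refine (ae_restrict_iff' measurableSet_Ioc).mpr (Filter.Eventually.of_forall fun s hs => ?_)
    rw [Real.norm_eq_abs, abs_mul, abs_of_nonneg (kern_nonneg' _), abs_of_nonneg (kern_nonneg' _)]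
    refine mul_le_mul_of_nonneg_left ?_ (kern_nonneg' _)
    exact Real.rpow_le_rpow_of_nonpos (by linarith [hs.2]) (by linarith [hs.2]) (by norm_num)
  have part2 : IntegrableOn (fun s : ℝ => (s - r) ^ (-(1/2):ℝ) * (t - s) ^ (-(1/2):ℝ))
      (Ioc m t) := by
    have base : IntervalIntegrable (fun x : ℝ => x ^ (-(1/2):ℝ)) volume 0 (t - m) :=
      intervalIntegral.intervalIntegrable_rpow' (by norm_num)
    have comp := base.comp_sub_left t
    rw [sub_zero, sub_sub_cancel] at comp
    have hbase : IntegrableOn (fun s : ℝ => (t - s) ^ (-(1/2):ℝ)) (Ioc m t) :=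
      (intervalIntegrable_iff_integrableOn_Ioc_of_le hmt.le).mp comp.symm
    refine Integrable.mono' (hbase.const_mul ((m - r) ^ (-(1/2):ℝ)))
      ((kernel_meas r t).aestronglyMeasurable.restrict) ?_
    refine (ae_restrict_iff' measurableSet_Ioc).mpr (Filter.Eventually.of_forall fun s hs => ?_)
    rw [Real.norm_eq_abs, abs_mul, abs_of_nonneg (kern_nonneg' _), abs_of_nonneg (kern_nonneg' _)]
    refine mul_le_mul_of_nonneg_right ?_ (kern_nonneg' _)
    exact Real.rpow_le_rpow_of_nonpos (by linarith [hs.1]) (by linarith [hs.1]) (by norm_num)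
  have := part1.union part2
  rwa [Ioc_union_Ioc_eq_Ioc hrm.le hmt.le] at this

lemma kernel_support {r t : ℝ} :
    Function.support (fun s : ℝ => (s - r) ^ (-(1/2):ℝ) * (t - s) ^ (-(1/2):ℝ)) ⊆ Ioc r t := by
  intro s hs
  rw [Function.mem_support] at hs
  by_contra hmem
  rw [mem_Ioc, not_and_or] at hmem
  rcases hmem with h | h
  · exact hs (by rw [show (s - r) ^ (-(1/2):ℝ) = 0 from
      kern_zero' (by push_neg at h; linarith), zero_mul])
  · exact hs (by rw [show (t - s) ^ (-(1/2):ℝ) = 0 from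
      kern_zero' (by push_neg at h; linarith), mul_zero])

lemma kernel_integrable (r t : ℝ) :
    Integrable (fun s : ℝ => (s - r) ^ (-(1/2):ℝ) * (t - s) ^ (-(1/2):ℝ)) volume := by
  rcases lt_or_ge r t with h | h
  · exact (integrableOn_iff_integrable_of_support_subset kernel_support).mp
      (kernel_integrableOn h)
  · have hz : (fun s : ℝ => (s - r) ^ (-(1/2):ℝ) * (t - s) ^ (-(1/2):ℝ))
        = fun _ => (0:ℝ) := by
      funext s
      rcases le_or_gt s r with h' | h'
      · rw [show (s - r) ^ (-(1/2):ℝ) = 0 from kern_zero' (by linarith), zero_mul]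
      · rw [show (t - s) ^ (-(1/2):ℝ) = 0 from kern_zero' (by linarith), mul_zero]
    rw [hz]
    exact integrable_zero _ _ _

lemma kernel_integral_line (r t : ℝ) :
    ∫ s : ℝ, (s - r) ^ (-(1/2):ℝ) * (t - s) ^ (-(1/2):ℝ)
      = if r < t then Real.pi else 0 := by
  split_ifs with h
  · rw [← setIntegral_eq_integral_of_forall_compl_eq_zero
      (s := Ioc r t) (fun s hs => ?_), ← intervalIntegral.integral_of_le h.le]
    · exact kernel_integral h
    · by_contra h0
      exact hs (kernel_support h0)
  · have hz : (fun s : ℝ => (s - r) ^ (-(1/2):ℝ) * (t - s) ^ (-(1/2):ℝ))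
        = fun _ => (0:ℝ) := by
      funext s
      rcases le_or_gt s r with h' | h'
      · rw [show (s - r) ^ (-(1/2):ℝ) = 0 from kern_zero' (by linarith), zero_mul]
      · rw [show (t - s) ^ (-(1/2):ℝ) = 0 from kern_zero' (by linarith), mul_zero]
    rw [hz, integral_zero]

lemma fubini_key {g : ℝ → ℝ} (hg : Continuous g) (hgc : HasCompactSupport g) (t : ℝ) :
    ∫ s in Iic t, (∫ r in Iic s, g r * (s - r) ^ (-(1/2):ℝ)) * (t - s) ^ (-(1/2):ℝ)
      = Real.pi * ∫ r in Iic t, g r := by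
  set ψ : ℝ × ℝ → ℝ :=
    fun p => g p.2 * ((p.1 - p.2) ^ (-(1/2):ℝ) * (t - p.1) ^ (-(1/2):ℝ)) with hψ
  have hψmeas : AEStronglyMeasurable ψ ((volume : Measure ℝ).prod volume) := by
    refine Measurable.aestronglyMeasurable ?_
    exact (hg.measurable.comp measurable_snd).mul
      (((measurable_fst.sub measurable_snd).pow_const _).mul
        ((measurable_const.sub measurable_fst).pow_const _))
  have hInt : Integrable ψ ((volume : Measure ℝ).prod volume) := by
    refine (integrable_prod_iff' hψmeas).mpr ⟨?_, ?_⟩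
    · refine Filter.Eventually.of_forall fun r => ?_
      exact (kernel_integrable r t).const_mul (g r)
    · have hnorm : ∀ r : ℝ, (∫ s, ‖ψ (s, r)‖)
          = |g r| * (if r < t then Real.pi else 0) := by
        intro r
        rw [← kernel_integral_line r t, ← integral_const_mul]
        congr 1; funext s
        rw [hψ, Real.norm_eq_abs, abs_mul,
          abs_of_nonneg (mul_nonneg (kern_nonneg' _) (kern_nonneg' _))]
      simp_rw [hnorm]
      refine Integrable.mono' (((hg.abs.integrable_of_hasCompactSupport hgc.abs).const_mul
        Real.pi)) ?_ (Filter.Eventually.of_forall fun r => ?_)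
      · refine (hg.measurable.abs.mul ?_).aestronglyMeasurable
        have : (fun r : ℝ => if r < t then Real.pi else 0)
            = (Iio t).indicator (fun _ => Real.pi) := by
          funext r; simp [Set.indicator_apply, mem_Iio]
        rw [this]
        exact measurable_const.indicator measurableSet_Iio
      · rw [Real.norm_eq_abs, abs_mul, abs_abs]
        rcases lt_or_ge r t with h | h
        · simp only [if_pos h, abs_of_nonneg Real.pi_pos.le]
          rw [mul_comm]
        · simp only [if_neg (not_lt.mpr h), abs_zero, mul_zero]
          positivity
  have stepA : ∫ s in Iic t, (∫ r in Iic s, g r * (s - r) ^ (-(1/2):ℝ)) * (t - s) ^ (-(1/2):ℝ)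
      = ∫ s, (∫ r in Iic s, g r * (s - r) ^ (-(1/2):ℝ)) * (t - s) ^ (-(1/2):ℝ) := by
    refine setIntegral_eq_integral_of_forall_compl_eq_zero fun s hs => ?_
    rw [show (t - s) ^ (-(1/2):ℝ) = 0 from kern_zero' (by simp at hs; linarith), mul_zero]
  have stepB : ∀ s : ℝ, (∫ r in Iic s, g r * (s - r) ^ (-(1/2):ℝ)) * (t - s) ^ (-(1/2):ℝ)
      = ∫ r, ψ (s, r) := by
    intro s
    have h1 : ∫ r in Iic s, g r * (s - r) ^ (-(1/2):ℝ) = ∫ r, g r * (s - r) ^ (-(1/2):ℝ) :=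
      setIntegral_eq_integral_of_forall_compl_eq_zero fun r hr => by
        rw [show (s - r) ^ (-(1/2):ℝ) = 0 from kern_zero' (by simp at hr; linarith), mul_zero]
    rw [h1, ← integral_mul_const]
    congr 1; funext r; rw [hψ]; ring
  have hswap : ∫ s, ∫ r, ψ (s, r) = ∫ r, ∫ s, ψ (s, r) :=
    integral_integral_swap hInt
  have stepC : ∀ r : ℝ, ∫ s, ψ (s, r) = g r * (if r < t then Real.pi else 0) := by
    intro r
    rw [← kernel_integral_line r t, ← integral_const_mul]
  have stepD : ∫ r, g r * (if r < t then Real.pi else 0) = Real.pi * ∫ r in Iic t, g r := by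
    have h1 : (fun r => g r * (if r < t then Real.pi else 0))
        = (Iio t).indicator (fun r => Real.pi * g r) := by
      funext r
      by_cases h : r < t <;> simp [Set.indicator_apply, mem_Iio, h, mul_comm]
    rw [h1, integral_indicator measurableSet_Iio, integral_const_mul,
      integral_Iic_eq_integral_Iio]
  rw [stepA]
  simp_rw [stepB]
  rw [hswap]
  simp_rw [stepC]
  exact stepD

lemma liouville_linear (γ c : ℝ) (g : ℝ → ℝ) (t : ℝ) :
    liouvilleDerivL γ (fun s => c * g s) t = c * liouvilleDerivL γ g t := by
  rw [liouvilleDerivL, liouvilleDerivL]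
  have h : (fun τ => ∫ s in Iic τ, (fun s => c * g s) s * (τ - s) ^ (-γ))
      = fun τ => c * ∫ s in Iic τ, g s * (τ - s) ^ (-γ) := by
    funext τ
    rw [← integral_const_mul]
    congr 1; funext s; ring
  rw [h, deriv_const_mul_field]
  ring

lemma double_half {f : ℝ → ℝ} (hf : ContDiff ℝ (⊤:ℕ∞) f) (hfc : HasCompactSupport f) (t : ℝ) :
    liouvilleDerivL (1/2) (liouvilleDerivL (1/2) f) t = deriv f t := by
  have hf' : ContDiff ℝ (⊤:ℕ∞) (deriv f) := (contDiff_infty_iff_deriv.mp hf).2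
  have hsq : Real.sqrt Real.pi * Real.sqrt Real.pi = Real.pi :=
    Real.mul_self_sqrt Real.pi_pos.le
  have hs0 : Real.sqrt Real.pi ≠ 0 := by
    intro h0; rw [h0, mul_zero] at hsq; exact Real.pi_ne_zero hsq.symm
  have hinner : (fun τ => ∫ s in Iic τ, liouvilleDerivL (1/2) f s * (τ - s) ^ (-(1/2):ℝ))
      = fun τ => ((1 / Real.sqrt Real.pi) * Real.pi) * f τ := by
    funext τ
    have h1 : ∀ s : ℝ, liouvilleDerivL (1/2) f s * (τ - s) ^ (-(1/2):ℝ)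
        = (1 / Real.sqrt Real.pi) *
          ((∫ r in Iic s, deriv f r * (s - r) ^ (-(1/2):ℝ)) * (τ - s) ^ (-(1/2):ℝ)) := by
      intro s; rw [liouville_repr hf hfc s]; ring
    rw [show (∫ s in Iic τ, liouvilleDerivL (1/2) f s * (τ - s) ^ (-(1/2):ℝ))
        = ∫ s in Iic τ, (1 / Real.sqrt Real.pi) *
          ((∫ r in Iic s, deriv f r * (s - r) ^ (-(1/2):ℝ)) * (τ - s) ^ (-(1/2):ℝ))
      from by exact setIntegral_congr_fun measurableSet_Iic fun s _ => h1 s]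
    rw [integral_const_mul, fubini_key hf'.continuous hfc.deriv τ,
      (hfc.integral_Iic_deriv_eq (hf.of_le (by exact_mod_cast le_top)) τ)]
    ring
  rw [liouvilleDerivL, show (1:ℝ) - 1/2 = 1/2 by norm_num, Real.Gamma_one_half_eq]
  have hexp : ∀ τ s : ℝ, (τ - s) ^ (-(1/2):ℝ) = (τ - s) ^ (-(1/2):ℝ) := fun _ _ => rfl
  rw [show (fun τ => ∫ s in Iic τ, liouvilleDerivL (1/2) f s * (τ - s) ^ (-(1/2):ℝ))
      = fun τ => ((1 / Real.sqrt Real.pi) * Real.pi) * f τ from hinner]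
  rw [deriv_const_mul_field]
  field_simp
  rw [Real.sq_sqrt Real.pi_pos.le]

lemma hterm1 (U₂ : ℝ → ℝ → ℝ) (a₁ t X u v : ℝ) (V₂ : ℝ → ℝ → ℝ)
    (hV₂ : ∀ t X, V₂ t X = deriv (fun X' => U₂ t X') X) :
    deriv (fun X => U₂ t X - a₁ / 2 * u ^ 2 + 1 / 2 * v ^ 2) X = V₂ t X := by
  have h : (fun X => U₂ t X - a₁ / 2 * u ^ 2 + 1 / 2 * v ^ 2)
      = fun X => U₂ t X + (1 / 2 * v ^ 2 - a₁ / 2 * u ^ 2) := by funext X; ring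
  rw [h, deriv_add_const, hV₂]

lemma hterm2 (a₁ c y : ℝ) :
    deriv (fun u : ℝ => c - a₁ / 2 * u ^ 2 + 1 / 2 * y ^ 2) = fun w => -a₁ * w := by
  funext w
  have h : (fun u : ℝ => c - a₁ / 2 * u ^ 2 + 1 / 2 * y ^ 2)
      = fun u : ℝ => (-(a₁ / 2)) * u ^ 2 + (c + 1 / 2 * y ^ 2) := by funext u; ring
  rw [h]
  have hd : HasDerivAt (fun u : ℝ => (-(a₁ / 2)) * u ^ 2 + (c + 1 / 2 * y ^ 2))
      ((-(a₁ / 2)) * (2 * w ^ 1)) w := ((hasDerivAt_pow 2 w).const_mul _).add_const _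
  rw [hd.deriv]; ring

lemma hterm3 (a₁ c u y : ℝ) :
    deriv (fun v : ℝ => c - a₁ / 2 * u ^ 2 + 1 / 2 * v ^ 2) y = y := by
  have h : (fun v : ℝ => c - a₁ / 2 * u ^ 2 + 1 / 2 * v ^ 2)
      = fun v : ℝ => (1 / 2 : ℝ) * v ^ 2 + (c - a₁ / 2 * u ^ 2) := by funext v; ring
  rw [h]
  have hd : HasDerivAt (fun v : ℝ => (1 / 2 : ℝ) * v ^ 2 + (c - a₁ / 2 * u ^ 2))
      ((1 / 2 : ℝ) * (2 * y ^ 1)) y := ((hasDerivAt_pow 2 y).const_mul _).add_const _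
  rw [hd.deriv]; ring


theorem second_order_ode_has_fractional_lagrangian
    (a₁ : ℝ)
    (U₂ : ℝ → ℝ → ℝ) (hU₂ : ContDiff ℝ (⊤ : ℕ∞) (Function.uncurry U₂))
    (V₂ : ℝ → ℝ → ℝ) (hV₂ : ∀ t X, V₂ t X = deriv (fun X' => U₂ t X') X)
    (x : ℝ → ℝ) (hx : ContDiff ℝ (⊤ : ℕ∞) x) (hxc : HasCompactSupport x)
    (L : ℝ → ℝ → ℝ → ℝ → ℝ)
    (hL : L = fun t X u v => U₂ t X - (a₁ / 2) * u ^ 2 + (1 / 2) * v ^ 2) :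
    (∀ t : ℝ,
        deriv (fun X => L t X (liouvilleDerivL (1 / 2) x t) (deriv x t)) (x t)
          - liouvilleDerivL (1 / 2)
              (fun s => deriv (fun u => L s (x s) u (deriv x s))
                (liouvilleDerivL (1 / 2) x s)) t
          + deriv (fun s => deriv (fun v => L s (x s) (liouvilleDerivL (1 / 2) x s) v)
              (deriv x s)) t
        = V₂ t (x t) + a₁ * deriv x t + deriv (deriv x) t) ∧
      ((∀ t : ℝ,
        deriv (fun X => L t X (liouvilleDerivL (1 / 2) x t) (deriv x t)) (x t)
          - liouvilleDerivL (1 / 2)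
              (fun s => deriv (fun u => L s (x s) u (deriv x s))
                (liouvilleDerivL (1 / 2) x s)) t
          + deriv (fun s => deriv (fun v => L s (x s) (liouvilleDerivL (1 / 2) x s) v)
              (deriv x s)) t = 0) ↔
        (∀ t : ℝ, deriv (deriv x) t + a₁ * deriv x t + V₂ t (x t) = 0)) := by
  have hx' : ContDiff ℝ (⊤:ℕ∞) x := hx.of_le (by simp)
  have key : ∀ t : ℝ,
      deriv (fun X => L t X (liouvilleDerivL (1 / 2) x t) (deriv x t)) (x t)
        - liouvilleDerivL (1 / 2)
            (fun s => deriv (fun u => L s (x s) u (deriv x s))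
              (liouvilleDerivL (1 / 2) x s)) t
        + deriv (fun s => deriv (fun v => L s (x s) (liouvilleDerivL (1 / 2) x s) v)
            (deriv x s)) t
      = V₂ t (x t) + a₁ * deriv x t + deriv (deriv x) t := by
    intro t
    simp only [hL]
    rw [hterm1 U₂ a₁ t (x t) (liouvilleDerivL (1 / 2) x t) (deriv x t) V₂ hV₂]
    have e2 : (fun s => deriv (fun u => U₂ s (x s) - a₁ / 2 * u ^ 2 + 1 / 2 * deriv x s ^ 2)
        (liouvilleDerivL (1 / 2) x s)) = fun s => -a₁ * liouvilleDerivL (1 / 2) x s := by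
      funext s
      rw [hterm2 a₁ (U₂ s (x s)) (deriv x s)]
    rw [e2]
    have e2' : (fun s : ℝ => -a₁ * liouvilleDerivL (1 / 2) x s)
        = fun s : ℝ => (-a₁) * liouvilleDerivL (1 / 2) x s := rfl
    rw [e2', liouville_linear (1/2) (-a₁) (liouvilleDerivL (1 / 2) x) t,
      double_half hx' hxc t]
    have e3 : (fun s => deriv (fun v => U₂ s (x s) - a₁ / 2 * liouvilleDerivL (1 / 2) x s ^ 2
        + 1 / 2 * v ^ 2) (deriv x s)) = deriv x := by
      funext s
      rw [hterm3 a₁ (U₂ s (x s)) (liouvilleDerivL (1 / 2) x s) (deriv x s)]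
    rw [e3]
    ring
  refine ⟨key, ?_⟩
  constructor
  · intro h t
    have := h t
    rw [key t] at this
    linarith
  · intro h t
    rw [key t]
    linarith [h t]
end
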